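/- Let M be a natural number and let P = P_{M+1} be the Legendre polynomial of degree M+1 defined by Rodrigues' formula. Let v_j ∈ ℝ satisfy P′(v_j) = 0 and P(v_j) ≠ 0, and let Q ∈ ℝ[X] be the polynomial with (X − v_j)·Q = (X² − 1)·P′. Then: (i) Q(v_j) = (M+1)(M+2)·P(v_j); (ii) Q(1) = Q(−1) = 0; and (iii) Q(v_m) = 0 for every v_m ≠ v_j with P′(v_m) = 0 and v_m ≠ ±1. Consequently, the polynomial B_j = Q/((M+1)(M+2)·P(v_j)) satisfies B_j(v_j) = 1, B_j(v_m) = 0 at every other zero v_m of P′, and B_j(±1) = 0. -/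

import Mathlib

/-!
Differentiating `(X² − 1)·u′ = 2n·X·u` for `u = (X² − 1)ⁿ` another `n + 1` times (Leibniz)
gives Legendre's equation `((X² − 1)·P′ₙ)′ = n(n + 1)·Pₙ`. Differentiating
`(X − v_j)·Q = (X² − 1)·P′` once and evaluating at `v_j` gives `Q(v_j) = n(n + 1)·P(v_j)`.
At `±1` Legendre's equation reads `n(n + 1)·P(±1) = ±2·P′(±1)`, so `P(v_j) ≠ 0 = P′(v_j)` forces
`v_j ≠ ±1`; then `Q` vanishes wherever `(X² − 1)·P′` does, except possibly at `v_j`.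
-/

open Polynomial

/-- The Legendre polynomial of degree `n`, defined by Rodrigues' formula
`P_n = (1/(2ⁿ n!)) (d/dX)ⁿ ((X² − 1)ⁿ)` in `ℝ[X]`. -/
noncomputable def legendre (n : ℕ) : Polynomial ℝ :=
  ((1 : ℝ) / (2 ^ n * n.factorial)) • (derivative^[n] ((X ^ 2 - 1) ^ n))

namespace Polynomial

variable {R : Type*} [CommRing R]

theorem iterate_derivative_X_sq_sub_one_mul (p : R[X]) (m : ℕ) :
    derivative^[m + 2] ((X ^ 2 - 1) * p) =
      (X ^ 2 - 1) * derivative^[m + 2] p + 2 * ((m : R[X]) + 2) * X * derivative^[m + 1] p +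
        ((m : R[X]) + 2) * ((m : R[X]) + 1) * derivative^[m] p := by
  rw [show (X ^ 2 - 1) * p = p * X * X - p by ring, iterate_derivative_sub,
    iterate_derivative_mul_X, iterate_derivative_mul_X, iterate_derivative_mul_X]
  simp only [nsmul_eq_mul, Nat.add_sub_cancel, show m + 2 - 1 = m + 1 from rfl, Nat.cast_add,
    Nat.cast_ofNat, Nat.cast_one]
  ring

theorem X_sq_sub_one_mul_derivative_pow (n : ℕ) :
    (X ^ 2 - 1 : R[X]) * derivative ((X ^ 2 - 1) ^ n) = (2 * n) • ((X ^ 2 - 1) ^ n * X) := by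
  cases n with
  | zero => simp
  | succ n =>
    rw [derivative_pow_succ]
    simp only [derivative_sub, derivative_X_pow, derivative_one, C_add, C_1, map_natCast,
      nsmul_eq_mul]
    push_cast
    ring

theorem derivative_X_sq_sub_one_mul_derivative_rodrigues (n : ℕ) :
    derivative ((X ^ 2 - 1) * derivative (derivative^[n] ((X ^ 2 - 1 : R[X]) ^ n))) =
      (n * (n + 1)) • derivative^[n] ((X ^ 2 - 1) ^ n) := by
  cases n with
  | zero => simp
  | succ m =>
    have h := congrArg (derivative^[m + 2]) (X_sq_sub_one_mul_derivative_pow (R := R) (m + 1))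
    rw [iterate_derivative_X_sq_sub_one_mul, iterate_derivative_smul, iterate_derivative_mul_X] at h
    simp only [← Function.iterate_succ_apply derivative, show m + 2 - 1 = m + 1 from rfl] at h
    simp only [Function.iterate_succ_apply'] at h ⊢
    set y := derivative^[m] ((X ^ 2 - 1 : R[X]) ^ (m + 1))
    simp only [derivative_mul, derivative_sub, derivative_X_sq, C_ofNat, derivative_one,
      nsmul_eq_mul] at h ⊢
    push_cast at h ⊢
    linear_combination h

theorem eval_eq_eval_derivative_of_X_sub_C_mul_eq {a : R} {p q : R[X]} (h : (X - C a) * q = p) :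
    q.eval a = (derivative p).eval a := by
  simp [← h, derivative_mul]

theorem eval_eq_zero_of_X_sub_C_mul_eq [IsDomain R] {a b : R} {p q : R[X]}
    (h : (X - C a) * q = p) (hba : b ≠ a) (hpb : p.eval b = 0) : q.eval b = 0 := by
  rw [← h, eval_mul, eval_sub, eval_X, eval_C] at hpb
  exact (mul_eq_zero.mp hpb).resolve_left (sub_ne_zero.mpr hba)

end Polynomial

theorem derivative_X_sq_sub_one_mul_derivative_legendre (n : ℕ) :
    derivative ((X ^ 2 - 1) * derivative (legendre n)) = (n * (n + 1)) • legendre n := by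
  rw [legendre, derivative_smul, mul_smul_comm, derivative_smul,
    derivative_X_sq_sub_one_mul_derivative_rodrigues, smul_comm]

theorem legendre_mul_eval_of_sq_eq_one (n : ℕ) {a : ℝ} (ha : a ^ 2 = 1) :
    ((n * (n + 1) : ℕ) : ℝ) * (legendre n).eval a = 2 * a * (derivative (legendre n)).eval a := by
  have h := congrArg (eval a) (derivative_X_sq_sub_one_mul_derivative_legendre n)
  rw [eval_smul, nsmul_eq_mul] at h
  simp only [derivative_mul, derivative_sub, derivative_X_sq, C_ofNat, derivative_one, eval_add,
    eval_mul, eval_sub, eval_pow, eval_X, eval_one, eval_zero, eval_ofNat, ha] at h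
  linear_combination -h

theorem legendre_lagrange_basis
    (M : ℕ) (vj : ℝ)
    (hvj : (derivative (legendre (M + 1))).eval vj = 0)
    (hPvj : (legendre (M + 1)).eval vj ≠ 0)
    (Q : Polynomial ℝ)
    (hQ : (X - C vj) * Q = (X ^ 2 - 1) * derivative (legendre (M + 1))) :
    Q.eval vj = ((M : ℝ) + 1) * ((M : ℝ) + 2) * (legendre (M + 1)).eval vj ∧
    Q.eval 1 = 0 ∧ Q.eval (-1) = 0 ∧
    (∀ vm : ℝ, vm ≠ vj → (derivative (legendre (M + 1))).eval vm = 0 →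
      vm ≠ 1 → vm ≠ -1 → Q.eval vm = 0) ∧
    ((fun v : ℝ => Q.eval v / (((M : ℝ) + 1) * ((M : ℝ) + 2) * (legendre (M + 1)).eval vj)) vj = 1 ∧
     (∀ vm : ℝ, vm ≠ vj → (derivative (legendre (M + 1))).eval vm = 0 →
        vm ≠ 1 → vm ≠ -1 →
        (fun v : ℝ => Q.eval v / (((M : ℝ) + 1) * ((M : ℝ) + 2) * (legendre (M + 1)).eval vj)) vm = 0) ∧
     (fun v : ℝ => Q.eval v / (((M : ℝ) + 1) * ((M : ℝ) + 2) * (legendre (M + 1)).eval vj)) 1 = 0 ∧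
     (fun v : ℝ => Q.eval v / (((M : ℝ) + 1) * ((M : ℝ) + 2) * (legendre (M + 1)).eval vj)) (-1) = 0) := by
  have hc : (((M + 1) * (M + 1 + 1) : ℕ) : ℝ) = ((M : ℝ) + 1) * ((M : ℝ) + 2) := by
    push_cast; ring
  have hQvj : Q.eval vj = ((M : ℝ) + 1) * ((M : ℝ) + 2) * (legendre (M + 1)).eval vj := by
    rw [eval_eq_eval_derivative_of_X_sub_C_mul_eq hQ,
      derivative_X_sq_sub_one_mul_derivative_legendre, eval_smul, nsmul_eq_mul, hc]
  have hvj_sq : vj ^ 2 ≠ 1 := fun h ↦ by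
    have := legendre_mul_eval_of_sq_eq_one (M + 1) h
    rw [hc, hvj, mul_zero] at this
    exact hPvj ((mul_eq_zero.mp this).resolve_left (by positivity))
  have hQ1 : Q.eval 1 = 0 :=
    eval_eq_zero_of_X_sub_C_mul_eq hQ (by rintro rfl; norm_num at hvj_sq) (by norm_num)
  have hQm1 : Q.eval (-1) = 0 :=
    eval_eq_zero_of_X_sub_C_mul_eq hQ (by rintro rfl; norm_num at hvj_sq) (by norm_num)
  have hQvm : ∀ vm : ℝ, vm ≠ vj → (derivative (legendre (M + 1))).eval vm = 0 →
      vm ≠ 1 → vm ≠ -1 → Q.eval vm = 0 :=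
    fun vm hvm h _ _ ↦ eval_eq_zero_of_X_sub_C_mul_eq hQ hvm (by simp [h])
  have hden : ((M : ℝ) + 1) * ((M : ℝ) + 2) * (legendre (M + 1)).eval vj ≠ 0 :=
    mul_ne_zero (by positivity) hPvj
  refine ⟨hQvj, hQ1, hQm1, hQvm, (div_eq_one_iff_eq hden).mpr hQvj, ?_, by simp [hQ1],
    by simp [hQm1]⟩
  exact fun vm hvm h h1 hm1 ↦ by simp [hQvm vm hvm h h1 hm1]
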